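/- Let Λ := U(2)³ ⊕ E8(−1) ⊕ (−2) ⊕ (−2). Suppose D ∈ Λ satisfies q(D) = −12 and div(D) = 2, and let φ ∈ O(Λ) be any isometry. Then the projection D_{U(2)³} of D to the U(2)³-summand is divisible by 2 (i.e. lies in 2·U(2)³) if and only if the projection φ(D)_{U(2)³} of φ(D) is divisible by 2. -/

import Mathlib

open Matrix

section Prelude

variable {ι : Type*} [Fintype ι] [DecidableEq ι]

/-- The bilinear form associated to a Gram matrix `G`. -/
def bf (G : Matrix ι ι ℤ) (x y : ι → ℤ) : ℤ := x ⬝ᵥ G.mulVec y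

/-- `φ` is an isometry of the lattice `(ι → ℤ, bf G)`. -/
def IsIsometry (G : Matrix ι ι ℤ) (φ : (ι → ℤ) ≃ₗ[ℤ] (ι → ℤ)) : Prop :=
  ∀ x y, bf G (φ x) (φ y) = bf G x y

/-- `x` is a primitive lattice vector. -/
def IsPrimitive (x : ι → ℤ) : Prop :=
  x ≠ 0 ∧ ∀ (k : ℤ) (y : ι → ℤ), x = k • y → IsUnit k

/-- `d` is the divisibility of `x`: the positive generator of the ideal `(x, L) ⊆ ℤ`. -/
def HasDiv (G : Matrix ι ι ℤ) (x : ι → ℤ) (d : ℤ) : Prop :=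
  0 < d ∧ (∀ y, d ∣ bf G x y) ∧ ∀ s : ℤ, (∀ y, s ∣ bf G x y) → s ∣ d

/-- The Gram matrix of the hyperbolic plane `U`. -/
def gramU : Matrix (Fin 2) (Fin 2) ℤ := !![0, 1; 1, 0]

/-- The Gram matrix of `E₈(-1)`: the negative of the `E₈` Cartan matrix. -/
def gramE8 : Matrix (Fin 8) (Fin 8) ℤ := - CartanMatrix.E₈

/-- The Gram matrix of `U³`. -/
def gramU3 : Matrix (Fin 2 × Fin 3) (Fin 2 × Fin 3) ℤ :=
  Matrix.blockDiagonal fun _ => gramU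

/-- The Gram matrix of `U(2)³`. -/
def gramU2_3 : Matrix (Fin 2 × Fin 3) (Fin 2 × Fin 3) ℤ :=
  Matrix.blockDiagonal fun _ => (2 : ℤ) • gramU

/-- The subgroup of isometries of the lattice with Gram matrix `G`. -/
def isomGroup (G : Matrix ι ι ℤ) : Subgroup ((ι → ℤ) ≃ₗ[ℤ] (ι → ℤ)) where
  carrier := {φ | IsIsometry G φ}
  one_mem' := fun _ _ => rfl
  mul_mem' := by
    intro a b ha hb x y
    show bf G (a (b x)) (a (b y)) = bf G x y
    rw [ha, hb]
  inv_mem' := by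
    intro a ha x y
    have h := ha (a.symm x) (a.symm y)
    simp only [LinearEquiv.apply_symm_apply] at h
    exact h.symm

/-- Two nonzero lattice vectors span the same ray iff positive multiples agree. -/
def raySetoid (ι : Type*) : Setoid {x : ι → ℤ // x ≠ 0} where
  r x y := ∃ a b : ℤ, 0 < a ∧ 0 < b ∧ a • x.1 = b • y.1
  iseqv := by
    constructor
    · exact fun x => ⟨1, 1, one_pos, one_pos, rfl⟩
    · rintro x y ⟨a, b, ha, hb, h⟩
      exact ⟨b, a, hb, ha, h.symm⟩
    · rintro x y z ⟨a, b, ha, hb, h⟩ ⟨c, d, hc, hd, h'⟩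
      refine ⟨c * a, b * d, mul_pos hc ha, mul_pos hb hd, ?_⟩
      calc (c * a) • x.1 = c • a • x.1 := (smul_smul c a x.1).symm
        _ = c • b • y.1 := by rw [h]
        _ = b • c • y.1 := smul_comm c b y.1
        _ = b • d • z.1 := by rw [h']
        _ = (b * d) • z.1 := smul_smul b d z.1

/-- The set of rays (half-lines spanned by nonzero lattice vectors). -/
def Ray (ι : Type*) := Quotient (raySetoid ι)

/-- The ray spanned by a nonzero lattice vector. -/
def rayMk (x : ι → ℤ) (hx : x ≠ 0) : Ray ι := Quotient.mk (raySetoid ι) ⟨x, hx⟩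

/-- The action of a linear automorphism on rays. -/
def rayMap (φ : (ι → ℤ) ≃ₗ[ℤ] (ι → ℤ)) : Ray ι → Ray ι :=
  Quotient.map (fun p => ⟨φ p.1, fun h => p.2 (by simpa using φ.map_eq_zero_iff.mp h)⟩)
    (by
      rintro x y ⟨a, b, ha, hb, h⟩
      refine ⟨a, b, ha, hb, ?_⟩
      show a • φ x.1 = b • φ y.1
      rw [← _root_.map_smul, ← _root_.map_smul, h])

end Prelude

/-- The index type of `Λ = U(2)³ ⊕ E₈(-1) ⊕ (-2) ⊕ (-2)`. -/
abbrev K16 := (Fin 2 × Fin 3) ⊕ (Fin 8 ⊕ (Fin 1 ⊕ Fin 1))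

/-- The Gram matrix of the Beauville–Bogomolov lattice `Λ = U(2)³ ⊕ E₈(-1) ⊕ (-2) ⊕ (-2)` of
Nikulin orbifolds. -/
def gramLambda : Matrix K16 K16 ℤ :=
  Matrix.fromBlocks gramU2_3 0 0
    (Matrix.fromBlocks gramE8 0 0 (Matrix.fromBlocks !![-2] 0 0 !![-2]))

/-!
Let `M = {y ∈ Λ | (y, Λ) ⊆ 2ℤ}`. The statement follows from the characterisation: when
`q(D) = -12` and `D ∈ M`, the `U(2)³`-part of `D` is divisible by `2` iff `(D, y) + (y, y) ≡ 0`
mod `4` for every `y ∈ M`; the right-hand side only involves the form, so it is `O(Λ)`-invariant.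

If `D_{U(2)³}` is even, then so is `D_{E₈(-1)}` because `E₈` is unimodular, and since `E₈(-1)` and
`U` are even lattices, `q(D) ≡ -2(a² + b²) mod 8` for the `(-2)`-coordinates `a, b` of `D`; hence
`a` and `b` are odd, which gives the congruence summand by summand. Conversely, pairing `D` with
the basis vectors of `U(2)³`, which lie in `M` and are isotropic, shows that `D_{U(2)³}` is even.
-/

section GramMatrix

variable {ι : Type*} [Fintype ι] {G : Matrix ι ι ℤ}

@[simp] theorem bf_zero_left (y : ι → ℤ) : bf G 0 y = 0 := zero_dotProduct _

@[simp] theorem bf_zero_right (x : ι → ℤ) : bf G x 0 = 0 := by simp [bf]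

theorem bf_smul_left (c : ℤ) (x y : ι → ℤ) : bf G (c • x) y = c * bf G x y :=
  smul_dotProduct c x _

theorem bf_smul_right (c : ℤ) (x y : ι → ℤ) : bf G x (c • y) = c * bf G x y := by
  rw [bf, mulVec_smul, dotProduct_smul, smul_eq_mul, bf]

theorem bf_smul_gram (c : ℤ) (x y : ι → ℤ) : bf (c • G) x y = c * bf G x y := by
  rw [bf, smul_mulVec, dotProduct_smul, smul_eq_mul, bf]

theorem bf_fromBlocks_zero {κ : Type*} [Fintype κ] (A : Matrix ι ι ℤ) (B : Matrix κ κ ℤ)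
    (x y : ι ⊕ κ → ℤ) :
    bf (fromBlocks A 0 0 B) x y =
      bf A (x ∘ Sum.inl) (y ∘ Sum.inl) + bf B (x ∘ Sum.inr) (y ∘ Sum.inr) := by
  rw [bf, fromBlocks_mulVec, ← Sum.elim_comp_inl_inr x, sumElim_dotProduct_sumElim]
  simp [bf]

theorem even_bf_self (hG : G.IsSymm) (hdiag : ∀ i, Even (G i i)) (x : ι → ℤ) :
    Even (bf G x x) := by
  rw [← ZMod.intCast_eq_zero_iff_even]
  have hsum : bf G x x = ∑ p : ι × ι, x p.1 * G p.1 p.2 * x p.2 := by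
    simp [bf, dotProduct, mulVec, Finset.mul_sum, Fintype.sum_prod_type, mul_assoc]
  rw [hsum, Int.cast_sum]
  -- mod 2, the terms at `(i, j)` and `(j, i)` cancel and the diagonal terms vanish
  refine Finset.sum_ninvolution Prod.swap (fun p => ?_) (fun p hp => ?_)
    (fun _ => Finset.mem_univ _) Prod.swap_swap
  · obtain ⟨i, j⟩ := p
    rw [← Int.cast_add, ZMod.intCast_eq_zero_iff_even]
    exact ⟨x i * G i j * x j, by simp only [Prod.swap, hG.apply i j]; ring⟩
  · obtain ⟨i, j⟩ := p
    rintro hij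
    obtain rfl : j = i := congrArg Prod.fst hij
    obtain ⟨c, hc⟩ := hdiag j
    exact hp (ZMod.intCast_eq_zero_iff_even.2 ⟨x j * c * x j, by rw [hc]; ring⟩)

theorem two_dvd_of_forall_two_dvd_bf [DecidableEq ι] (hdet : Odd G.det) {x : ι → ℤ}
    (hx : ∀ y, 2 ∣ bf G x y) (j : ι) : 2 ∣ x j := by
  have hxG : ∀ i, 2 ∣ (x ᵥ* G) i := fun i => by
    have h := hx (Pi.single i 1)
    rwa [bf, dotProduct_mulVec, dotProduct_single_one] at h
  have hadj : G.det * x j = (x ᵥ* G ᵥ* G.adjugate) j := by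
    simp [vecMul_vecMul, mul_adjugate, mul_comm]
  have hdvd : 2 ∣ G.det * x j := by
    rw [hadj]
    exact Finset.dvd_sum fun i _ => (hxG i).mul_right _
  exact (Int.prime_two.dvd_mul.1 hdvd).resolve_left
    (Int.not_even_iff_odd.2 hdet ∘ even_iff_two_dvd.2)

/-- For the lattice `Λ` with Gram matrix `G`, this is `Λ ∩ 2Λ^∨`. -/
def twoDual (G : Matrix ι ι ℤ) : Set (ι → ℤ) := {y | ∀ z, 2 ∣ bf G y z}

def IsCharModFour (G : Matrix ι ι ℤ) (x : ι → ℤ) : Prop :=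
  ∀ y ∈ twoDual G, 4 ∣ bf G x y + bf G y y

end GramMatrix

namespace IsIsometry

variable {ι : Type*} [Fintype ι] {G : Matrix ι ι ℤ} {φ : (ι → ℤ) ≃ₗ[ℤ] (ι → ℤ)}

theorem symm (hφ : IsIsometry G φ) : IsIsometry G φ.symm := fun x y => by
  simpa using (hφ (φ.symm x) (φ.symm y)).symm

theorem bf_map_left (hφ : IsIsometry G φ) (x y : ι → ℤ) :
    bf G (φ x) y = bf G x (φ.symm y) := by
  simpa using hφ x (φ.symm y)

theorem map_mem_twoDual_iff (hφ : IsIsometry G φ) {y : ι → ℤ} :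
    φ y ∈ twoDual G ↔ y ∈ twoDual G :=
  ⟨fun h z => hφ y z ▸ h (φ z), fun h z => hφ.bf_map_left y z ▸ h (φ.symm z)⟩

theorem isCharModFour_map (hφ : IsIsometry G φ) {x : ι → ℤ} (hx : IsCharModFour G x) :
    IsCharModFour G (φ x) := fun y hy => by
  simpa [hφ.bf_map_left, hφ.symm y y] using hx (φ.symm y) (hφ.symm.map_mem_twoDual_iff.2 hy)

theorem isCharModFour_map_iff (hφ : IsIsometry G φ) {x : ι → ℤ} :
    IsCharModFour G (φ x) ↔ IsCharModFour G x :=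
  ⟨fun h => by simpa using hφ.symm.isCharModFour_map h, hφ.isCharModFour_map⟩

end IsIsometry

theorem exists_eq_smul_of_forall_dvd {α : Type*} {n : ℤ} {v : α → ℤ} (h : ∀ i, n ∣ v i) :
    ∃ w : α → ℤ, v = n • w := by
  choose w hw using h
  exact ⟨w, funext hw⟩

theorem odd_and_odd_of_mul_self_add_mul_self_eq {a b m : ℤ} (h : a * a + b * b = 4 * m + 2) :
    Odd a ∧ Odd b := by
  rcases Int.even_or_odd' a with ⟨k, rfl | rfl⟩ <;>
    rcases Int.even_or_odd' b with ⟨l, rfl | rfl⟩ <;>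
    first | exact ⟨odd_two_mul_add_one k, odd_two_mul_add_one l⟩ | (ring_nf at h; omega)

theorem even_mul_add_self_of_odd {a : ℤ} (ha : Odd a) (c : ℤ) : Even (c * (a + c)) := by
  rcases Int.even_or_odd c with hc | hc
  · exact hc.mul_right _
  · exact (ha.add_odd hc).mul_left _

theorem bf_gramU3 (x y : Fin 2 × Fin 3 → ℤ) :
    bf gramU3 x y = ∑ k, (x (0, k) * y (1, k) + x (1, k) * y (0, k)) := by
  simp [bf, gramU3, gramU, dotProduct, mulVec, blockDiagonal_apply, Fintype.sum_prod_type,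
    Fin.sum_univ_two, Finset.sum_add_distrib]

theorem even_bf_gramU3_self (x : Fin 2 × Fin 3 → ℤ) : Even (bf gramU3 x x) := by
  refine ⟨∑ k, x (0, k) * x (1, k), ?_⟩
  rw [bf_gramU3, ← Finset.sum_add_distrib]
  exact Finset.sum_congr rfl fun k _ => by ring

theorem bf_gramU3_single_right (x : Fin 2 × Fin 3 → ℤ) (i : Fin 2) (k : Fin 3) :
    bf gramU3 x (Pi.single (i, k) 1) = x (i.rev, k) := by
  fin_cases i <;> simp [bf_gramU3, Pi.single_apply]

theorem even_bf_gramE8_self (x : Fin 8 → ℤ) : Even (bf gramE8 x x) :=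
  even_bf_self CartanMatrix.E₈_isSymm.neg (fun i => by simp) x

theorem odd_det_gramE8 : Odd gramE8.det := by
  simp [gramE8, det_neg, CartanMatrix.E₈_det]

theorem gramU2_3_eq_smul : gramU2_3 = (2 : ℤ) • gramU3 := by
  rw [gramU3, ← blockDiagonal_smul]
  rfl

-- the generators of the two `(-2)` summands of `Λ`
local notation "t₁" => (Sum.inr (Sum.inr (Sum.inl 0)) : K16)
local notation "t₂" => (Sum.inr (Sum.inr (Sum.inr 0)) : K16)

theorem bf_gramLambda (x y : K16 → ℤ) :
    bf gramLambda x y = 2 * bf gramU3 (x ∘ Sum.inl) (y ∘ Sum.inl)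
      + bf gramE8 (x ∘ Sum.inr ∘ Sum.inl) (y ∘ Sum.inr ∘ Sum.inl)
      - 2 * (x t₁ * y t₁ + x t₂ * y t₂) := by
  rw [gramLambda, bf_fromBlocks_zero, bf_fromBlocks_zero, bf_fromBlocks_zero,
    gramU2_3_eq_smul, bf_smul_gram]
  simp [bf, vecHead, Function.comp_def]
  ring

theorem two_dvd_of_mem_twoDual_gramLambda {y : K16 → ℤ} (hy : y ∈ twoDual gramLambda)
    (j : Fin 8) : 2 ∣ y (Sum.inr (Sum.inl j)) := by
  refine two_dvd_of_forall_two_dvd_bf (x := y ∘ Sum.inr ∘ Sum.inl) odd_det_gramE8 (fun z => ?_) j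
  have h := hy (Sum.elim 0 (Sum.elim z 0))
  rw [bf_gramLambda] at h
  simpa [bf, ← Function.comp_assoc] using h

theorem two_dvd_of_isCharModFour_gramLambda {D : K16 → ℤ} (hD : IsCharModFour gramLambda D)
    (u : Fin 2 × Fin 3) : 2 ∣ D (Sum.inl u) := by
  obtain ⟨i, k⟩ := u
  set y : K16 → ℤ := Sum.elim (Pi.single (i.rev, k) 1) 0
  have hy : y ∈ twoDual gramLambda := fun z =>
    ⟨bf gramU3 (Pi.single (i.rev, k) 1) (z ∘ Sum.inl), by
      rw [bf_gramLambda]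
      simp [y, bf, ← Function.comp_assoc, -Sum.elim_single_zero]⟩
  have h := hD y hy
  rw [bf_gramLambda, bf_gramLambda] at h
  simp only [y, ← Function.comp_assoc, Sum.elim_comp_inl, Sum.elim_comp_inr, Pi.zero_comp,
    Sum.elim_inr, Pi.zero_apply, bf_gramU3_single_right] at h
  have hrev : i ≠ i.rev := by fin_cases i <;> decide
  replace h : 4 ∣ 2 * D (Sum.inl (i, k)) := by simpa [hrev] using h
  omega

theorem isCharModFour_gramLambda_of_two_dvd {D : K16 → ℤ} (hq : bf gramLambda D D = -12)
    (hD : D ∈ twoDual gramLambda) (hU : ∀ u, 2 ∣ D (Sum.inl u)) :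
    IsCharModFour gramLambda D := by
  intro y hy
  obtain ⟨u, hu⟩ := exists_eq_smul_of_forall_dvd (v := D ∘ Sum.inl) hU
  obtain ⟨e, he⟩ := exists_eq_smul_of_forall_dvd (v := D ∘ Sum.inr ∘ Sum.inl)
    (two_dvd_of_mem_twoDual_gramLambda hD)
  obtain ⟨f, hf⟩ := exists_eq_smul_of_forall_dvd (v := y ∘ Sum.inr ∘ Sum.inl)
    (two_dvd_of_mem_twoDual_gramLambda hy)
  obtain ⟨ha, hb⟩ : Odd (D t₁) ∧ Odd (D t₂) := by
    obtain ⟨s, hs⟩ := even_bf_gramU3_self u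
    obtain ⟨t, ht⟩ := even_bf_gramE8_self e
    rw [bf_gramLambda, hu, he] at hq
    simp only [bf_smul_left, bf_smul_right, hs, ht] at hq
    exact odd_and_odd_of_mul_self_add_mul_self_eq (m := 2 * s + t + 1) (by linarith)
  obtain ⟨r, hr⟩ := even_bf_gramU3_self (y ∘ Sum.inl)
  obtain ⟨p₁, hp₁⟩ := even_mul_add_self_of_odd ha (y t₁)
  obtain ⟨p₂, hp₂⟩ := even_mul_add_self_of_odd hb (y t₂)
  rw [bf_gramLambda, bf_gramLambda, hu, he, hf, hr]
  simp only [bf_smul_left, bf_smul_right]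
  exact ⟨bf gramU3 u (y ∘ Sum.inl) + bf gramE8 e f + r + bf gramE8 f f - p₁ - p₂,
    by linear_combination (-2) * hp₁ - 2 * hp₂⟩

theorem isCharModFour_gramLambda_iff {D : K16 → ℤ} (hq : bf gramLambda D D = -12)
    (hD : D ∈ twoDual gramLambda) :
    IsCharModFour gramLambda D ↔ ∀ u, 2 ∣ D (Sum.inl u) :=
  ⟨two_dvd_of_isCharModFour_gramLambda, isCharModFour_gramLambda_of_two_dvd hq hD⟩

/-- If `D ∈ Λ = U(2)³ ⊕ E₈(-1) ⊕ (-2)²` has `q(D) = -12` and `div(D) = 2` and `φ ∈ O(Λ)`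
is any isometry, then the `U(2)³`-projection of `D` is divisible by `2` iff the
`U(2)³`-projection of `φ(D)` is divisible by `2`. -/
theorem divisible_U23_part_invariant (D : K16 → ℤ)
    (hq : bf gramLambda D D = -12) (hdiv : HasDiv gramLambda D 2)
    (φ : (K16 → ℤ) ≃ₗ[ℤ] (K16 → ℤ)) (hφ : IsIsometry gramLambda φ) :
    (∀ u : Fin 2 × Fin 3, 2 ∣ D (Sum.inl u)) ↔
      (∀ u : Fin 2 × Fin 3, 2 ∣ φ D (Sum.inl u)) := by
  have hD : D ∈ twoDual gramLambda := hdiv.2.1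
  rw [← isCharModFour_gramLambda_iff hq hD,
    ← isCharModFour_gramLambda_iff ((hφ D D).trans hq) (hφ.map_mem_twoDual_iff.2 hD),
    hφ.isCharModFour_map_iff]
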